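/- Let π, σ ∈ S_n be such that π ≲ σ, meaning that for each block B of the join partition π ∨ σ (the finest partition whose blocks are unions of cycles of π and of σ that is coarser than both cycle partitions), the restriction π|_B is non-crossing with respect to σ|_B. Then |σ| + 2(#(σ) − #(π ∨ σ)) = |π| + |π⁻¹σ|. -/

import Mathlib

open Equiv

namespace ThirdOrderFree

variable {α : Type*}

/-- The setoid whose classes are the cycles (orbits) of a permutation. -/
def sameCycleSetoid (σ : Perm α) : Setoid α :=
  ⟨σ.SameCycle,
    ⟨fun x => Equiv.Perm.SameCycle.refl σ x, fun h => h.symm, fun h h' => h.trans h'⟩⟩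

/-- Number of cycles (orbits, including fixed points) of a permutation. -/
noncomputable def numCycles (σ : Perm α) : ℕ :=
  Nat.card (Quotient (sameCycleSetoid σ))

/-- The length `|σ| = n - #(σ)`. -/
noncomputable def len (σ : Perm α) : ℕ :=
  Nat.card α - numCycles σ

/-- Join of the cycle partitions of two permutations. -/
def joinSetoid (π σ : Perm α) : Setoid α :=
  sameCycleSetoid π ⊔ sameCycleSetoid σ

/-- Number of blocks of `π ∨ σ`. -/
noncomputable def numBlocks (π σ : Perm α) : ℕ :=
  Nat.card (Quotient (joinSetoid π σ))

/-- `π ∨ σ` is the one-block partition. -/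
def JoinTop (π σ : Perm α) : Prop :=
  ∀ x y : α, (joinSetoid π σ).r x y

/-- `π` is a non-crossing (annular) permutation with respect to `γ`. -/
def SNC (γ π : Perm α) : Prop :=
  JoinTop π γ ∧
    numCycles π + numCycles (π⁻¹ * γ) + numCycles γ = Nat.card α + 2

/-- `τ` separates the points of `N`: no cycle of `τ` contains two distinct points of `N`. -/
def Separates (τ : Perm α) (N : Set α) : Prop :=
  ∀ x ∈ N, ∀ y ∈ N, τ.SameCycle x y → x = y

/-- The first-return map of `σ` on the set `{x | p x}`. -/
noncomputable def firstReturn (σ : Perm α) (p : α → Prop) (x : α) : α :=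
  (σ ^ sInf {k : ℕ | 0 < k ∧ p ((σ ^ k) x)}) x

open Classical in
/-- The restriction of `σ` to `{x | p x}`: the unique permutation agreeing with the
first-return map (it exists whenever `α` is finite). -/
noncomputable def restrictPerm (σ : Perm α) (p : α → Prop) : Perm {x // p x} :=
  if h : ∃ e : Perm {x // p x}, ∀ x : {x // p x}, (e x : α) = firstReturn σ p (x : α)
  then h.choose else 1

/-- `π ≤ σ` : each cycle of `π` is contained in a cycle of `σ` and on each cycle of
`σ` the restriction of `π` is a non-crossing permutation of that cycle. -/
def le' (π σ : Perm α) : Prop :=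
  (∀ x y : α, π.SameCycle x y → σ.SameCycle x y) ∧
  ∀ x : α,
    numCycles (restrictPerm π (σ.SameCycle x)) +
      numCycles ((restrictPerm π (σ.SameCycle x))⁻¹ * restrictPerm σ (σ.SameCycle x)) =
      Nat.card {y // σ.SameCycle x y} + 1

/-- `π ≲ σ` : on each block of `π ∨ σ`, `π` is annular non-crossing w.r.t. `σ`. -/
def ncRel (π σ : Perm α) : Prop :=
  ∀ x : α,
    SNC (restrictPerm σ ((joinSetoid π σ).r x)) (restrictPerm π ((joinSetoid π σ).r x))

/-- The permutation of `Σ i, Fin (n i)` rotating each block: the product of the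
directed cycles `T i` of lengths `n i`. -/
def blockRotate {ι : Type*} (n : ι → ℕ) : Perm ((i : ι) × Fin (n i)) :=
  Equiv.sigmaCongrRight fun i => finRotate (n i)

/-- The first elements of the blocks. -/
def zeroSection {ι : Type*} (n : ι → ℕ) (hn : ∀ i, 0 < n i) :
    ι ≃ {x : (i : ι) × Fin (n i) // x.2.val = 0} where
  toFun i := ⟨⟨i, ⟨0, hn i⟩⟩, rfl⟩
  invFun x := x.1.1
  left_inv i := rfl
  right_inv := fun x => by
    obtain ⟨⟨i, j⟩, hj⟩ := x
    exact Subtype.ext (congrArg (Sigma.mk i) (Fin.ext hj.symm))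

/-- `π_{\vec n}` : merge the blocks `T i` along the cycles of `π`; within a block it
moves forward, and the last element of block `i` is sent to the first element of
block `π i`. -/
def mergePerm {ι : Type*} (n : ι → ℕ) (hn : ∀ i, 0 < n i) (π : Perm ι) :
    Perm ((i : ι) × Fin (n i)) :=
  (π.extendDomain (zeroSection n hn)) * blockRotate n

/-! On a block `B` of `π ∨ σ` the permutations `π`, `σ` and `π⁻¹σ` all preserve `B`, so their
restrictions to `B` are plain restrictions, and the non-crossing condition says that their
cycle counts add up to `|B| + 2`. Cycle counts are additive over the blocks, hence
`#(π) + #(π⁻¹σ) + #(σ) = n + 2 #(π ∨ σ)`; the claimed identity is this equation written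
with lengths, where `#(π ∨ σ) ≤ #(σ)` keeps the truncated subtraction honest. -/

variable {β : Type*}

lemma rel_apply_iff_of_forall_rel {f : Perm β} {J : Setoid β} (hf : ∀ x, J.r x (f x))
    (x y : β) :
    J.r x (f y) ↔ J.r x y :=
  ⟨fun h => J.trans h (J.symm (hf y)), fun h => J.trans h (hf y)⟩

lemma sameCycleSetoid_le_iff {f : Perm β} {J : Setoid β} :
    sameCycleSetoid f ≤ J ↔ ∀ x, J.r x (f x) := by
  refine ⟨fun h x => h ⟨1, by simp⟩, fun hf x y ⟨k, hk⟩ => hk ▸ ?_⟩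
  -- the block of `x` is `f`-invariant, hence invariant under every power of `f`
  simpa using (((f.subtypePerm (rel_apply_iff_of_forall_rel hf x)) ^ k) ⟨x, J.refl x⟩).2

lemma rel_apply_iff_of_le {f : Perm β} {J : Setoid β} (h : sameCycleSetoid f ≤ J) (x y : β) :
    J.r x (f y) ↔ J.r x y :=
  rel_apply_iff_of_forall_rel (sameCycleSetoid_le_iff.1 h) x y

lemma restrictPerm_eq_subtypePerm (f : Perm β) {p : β → Prop} (hp : ∀ x, p (f x) ↔ p x) :
    restrictPerm f p = f.subtypePerm hp := by
  have hfirst : ∀ x : {x // p x}, firstReturn f p x = f x := fun ⟨x, hx⟩ => by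
    have h1 : 1 ∈ {k : ℕ | 0 < k ∧ p ((f ^ k) x)} := ⟨one_pos, by simpa using (hp x).2 hx⟩
    have hinf : sInf {k : ℕ | 0 < k ∧ p ((f ^ k) x)} = 1 :=
      le_antisymm (Nat.sInf_le h1) (Nat.sInf_mem ⟨1, h1⟩).1
    simp [firstReturn, hinf]
  have hex : ∃ e : Perm {x // p x}, ∀ x : {x // p x}, (e x : β) = firstReturn f p x :=
    ⟨f.subtypePerm hp, fun x => (hfirst x).symm⟩
  rw [restrictPerm, dif_pos hex]
  exact Equiv.ext fun x => Subtype.ext ((hex.choose_spec x).trans (hfirst x))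

lemma restrictPerm_inv_mul (f g : Perm β) {p : β → Prop} (hf : ∀ x, p (f x) ↔ p x)
    (hg : ∀ x, p (g x) ↔ p x) :
    restrictPerm (f⁻¹ * g) p = (restrictPerm f p)⁻¹ * restrictPerm g p := by
  have hfg : ∀ x, p ((f⁻¹ * g) x) ↔ p x := fun x => by
    rw [Perm.mul_apply, ← hf]
    simpa using hg x
  rw [restrictPerm_eq_subtypePerm _ hf, restrictPerm_eq_subtypePerm _ hg,
    restrictPerm_eq_subtypePerm _ hfg]
  rfl

lemma numCycles_restrictPerm (f : Perm β) {p : β → Prop} (hp : ∀ x, p (f x) ↔ p x) :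
    numCycles (restrictPerm f p) =
      Nat.card (Quotient ((sameCycleSetoid f).comap (Subtype.val : {x // p x} → β))) := by
  have hcycles : sameCycleSetoid (f.subtypePerm hp) = (sameCycleSetoid f).comap Subtype.val :=
    Setoid.ext fun _ _ => Perm.sameCycle_subtypePerm
  rw [restrictPerm_eq_subtypePerm f hp, numCycles, hcycles]

lemma rel_out_eq_preimage (J : Setoid β) (q : Quotient J) :
    J.r q.out = (· ∈ Quotient.mk J ⁻¹' {q}) :=
  funext fun _ => propext (by simp [Quotient.mk_eq_iff_out, Setoid.comm' J])

lemma card_eq_sum_card_block [Finite β] (J : Setoid β) [Fintype (Quotient J)] :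
    Nat.card β = ∑ q : Quotient J, Nat.card {y // J.r q.out y} := by
  simp_rw [rel_out_eq_preimage]
  exact (Nat.card_congr (Equiv.sigmaFiberEquiv (Quotient.mk J))).symm.trans Nat.card_sigma

lemma numCycles_eq_sum_numCycles_restrictPerm [Finite β] {f : Perm β} {J : Setoid β}
    [Fintype (Quotient J)] (h : sameCycleSetoid f ≤ J) :
    numCycles f = ∑ q : Quotient J, numCycles (restrictPerm f (J.r q.out)) := by
  refine (Nat.card_congr (Setoid.sigmaQuotientEquivOfLe h)).symm.trans
    (Nat.card_sigma.trans (Finset.sum_congr rfl fun q _ => ?_))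
  rw [numCycles_restrictPerm f (rel_apply_iff_of_le h q.out), rel_out_eq_preimage]

lemma numCycles_le_card [Finite β] (f : Perm β) : numCycles f ≤ Nat.card β :=
  Nat.card_le_card_of_surjective _ Quotient.mk_surjective

lemma numBlocks_le_numCycles_right [Finite β] (π σ : Perm β) :
    numBlocks π σ ≤ numCycles σ :=
  Nat.card_le_card_of_surjective (Quotient.map' id (le_sup_right : _ ≤ joinSetoid π σ))
    (Quotient.ind fun x => ⟨Quotient.mk _ x, rfl⟩)

lemma sameCycleSetoid_inv_mul_le_joinSetoid (π σ : Perm β) :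
    sameCycleSetoid (π⁻¹ * σ) ≤ joinSetoid π σ := by
  have hπ := sameCycleSetoid_le_iff.1 (le_sup_left : _ ≤ joinSetoid π σ)
  have hσ := sameCycleSetoid_le_iff.1 (le_sup_right : _ ≤ joinSetoid π σ)
  refine sameCycleSetoid_le_iff.2 fun x => (joinSetoid π σ).trans (hσ x) ?_
  simpa using (joinSetoid π σ).symm (hπ (π⁻¹ (σ x)))

theorem numCycles_add_numCycles_add_numCycles_of_ncRel [Finite β] {π σ : Perm β}
    (h : ncRel π σ) :
    numCycles π + numCycles (π⁻¹ * σ) + numCycles σ = Nat.card β + 2 * numBlocks π σ := by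
  set J := joinSetoid π σ
  let _ : Fintype (Quotient J) := Fintype.ofFinite _
  have hπ : sameCycleSetoid π ≤ J := le_sup_left
  have hσ : sameCycleSetoid σ ≤ J := le_sup_right
  have hblock : ∀ q : Quotient J,
      numCycles (restrictPerm π (J.r q.out)) + numCycles (restrictPerm (π⁻¹ * σ) (J.r q.out)) +
        numCycles (restrictPerm σ (J.r q.out)) = Nat.card {y // J.r q.out y} + 2 := fun q => by
    rw [restrictPerm_inv_mul π σ (rel_apply_iff_of_le hπ _) (rel_apply_iff_of_le hσ _)]
    exact (h q.out).2
  rw [numCycles_eq_sum_numCycles_restrictPerm hπ, numCycles_eq_sum_numCycles_restrictPerm hσ,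
    numCycles_eq_sum_numCycles_restrictPerm (sameCycleSetoid_inv_mul_le_joinSetoid π σ),
    card_eq_sum_card_block J, ← Finset.sum_add_distrib, ← Finset.sum_add_distrib,
    Finset.sum_congr rfl fun q _ => hblock q, Finset.sum_add_distrib, Finset.sum_const,
    Finset.card_univ, smul_eq_mul, numBlocks, Nat.card_eq_fintype_card, mul_comm]

/-- if `π ≲ σ` then `|σ| + 2(#(σ) − #(π ∨ σ)) = |π| + |π⁻¹σ|`. -/
theorem stmt4 {n : ℕ} (π σ : Equiv.Perm (Fin n)) (h : ncRel π σ) :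
    len σ + 2 * (numCycles σ - numBlocks π σ) = len π + len (π⁻¹ * σ) := by
  have hsum := numCycles_add_numCycles_add_numCycles_of_ncRel h
  have := numCycles_le_card π
  have := numCycles_le_card σ
  have := numCycles_le_card (π⁻¹ * σ)
  have := numBlocks_le_numCycles_right π σ
  simp only [len]
  omega

end ThirdOrderFree
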